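/- Let n ≥ 1, let U ⊆ ℝ^{n+1} be open, and let ρ : U → ℝ be smooth with ρ < 0 on U. Set u := −(−2ρ)^{1/2}. Then u is smooth on U and J[ρ](x) = −(−u(x))^{n+3} · det(∂_i∂_j u(x)) for every x ∈ U. -/

import Mathlib

/-!
Writing `ρ = -u²/2`, the chain rule gives `∂ρ = -u ∇u` and `∂²ρ = -∇u ∇uᵀ - u ∂²u`, so the
matrix defining `J[ρ]` is bordered by the corner `-u²` and the row and column `-u ∇u`. Eliminating
that border against the corner (a Schur complement) cancels the rank-one term `∇u ∇uᵀ`, and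
`J[ρ] = -u² · det(-u ∂²u) = -(-u)^(n+3) · det(∂²u)`.
-/

open MeasureTheory Topology

noncomputable def pd {m : ℕ} (f : (Fin m → ℝ) → ℝ) (i : Fin m) (x : Fin m → ℝ) : ℝ :=
  fderiv ℝ f x (Pi.single i 1)

noncomputable def hess {m : ℕ} (f : (Fin m → ℝ) → ℝ) (x : Fin m → ℝ) :
    Matrix (Fin m) (Fin m) ℝ :=
  Matrix.of fun i j => pd (pd f j) i x

noncomputable def Jop {n : ℕ} (ρ : (Fin (n + 1) → ℝ) → ℝ) (x : Fin (n + 1) → ℝ) : ℝ :=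
  (Matrix.of (fun I J : Fin (n + 2) =>
    Fin.cases (Fin.cases (2 * ρ x) (fun j => pd ρ j x) J)
      (fun i => Fin.cases (pd ρ i x) (fun j => hess ρ x i j) J) I)).det

structure IsDefiningFn (n : ℕ) (Ω V : Set (Fin (n + 1) → ℝ)) (ρ : (Fin (n + 1) → ℝ) → ℝ) : Prop where
  openV : IsOpen V
  frontier_sub : frontier Ω ⊆ V
  smooth : ContDiffOn ℝ (⊤ : ℕ∞) ρ V
  neg_iff : ∀ x ∈ V, (x ∈ Ω ↔ ρ x < 0)
  zero_bdry : ∀ x ∈ frontier Ω, ρ x = 0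
  grad_ne : ∀ x ∈ frontier Ω, ∃ i, pd ρ i x ≠ 0

def StrictlyConvexWith (n : ℕ) (Ω : Set (Fin (n + 1) → ℝ)) (ρ : (Fin (n + 1) → ℝ) → ℝ) : Prop :=
  ∀ p ∈ frontier Ω, ∀ w : Fin (n + 1) → ℝ, w ≠ 0 →
    (∑ i, pd ρ i p * w i) = 0 → 0 < ∑ i, ∑ j, hess ρ p i j * w i * w j

structure IsBddStrictlyConvexDomain (n : ℕ) (Ω : Set (Fin (n + 1) → ℝ)) : Prop where
  isOpen : IsOpen Ω
  nonempty : Ω.Nonempty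
  bounded : Bornology.IsBounded Ω
  convexBdry : ∃ V ρ, IsDefiningFn n Ω V ρ ∧ StrictlyConvexWith n Ω ρ

namespace Matrix

def border {R : Type*} {m : ℕ} (c : R) (v w : Fin m → R) (H : Matrix (Fin m) (Fin m) R) :
    Matrix (Fin (m + 1)) (Fin (m + 1)) R :=
  Matrix.of fun I J =>
    Fin.cases (Fin.cases c v J) (fun i => Fin.cases (w i) (fun j => H i j) J) I

theorem det_border {K : Type*} [Field K] {m : ℕ} {c : K} (hc : c ≠ 0) (v w : Fin m → K)
    (H : Matrix (Fin m) (Fin m) K) :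
    (border c v w H).det = c * (H - c⁻¹ • vecMulVec w v).det := by
  set S := H - c⁻¹ • vecMulVec w v
  -- subtracting `w i / c` times the first row from row `i + 1` clears the first column
  have hrow : (border c v w H).det = (border c v 0 S).det := by
    refine det_eq_of_forall_row_eq_smul_add_const (Fin.cases 0 fun i => w i / c) 0 rfl ?_
    intro I J
    refine Fin.cases ?_ (fun i => ?_) I <;> refine Fin.cases ?_ (fun j => ?_) J <;>
      simp only [S, border, of_apply, Fin.cases_zero, Fin.cases_succ, Pi.zero_apply, sub_apply,
        smul_apply, vecMulVec_apply, smul_eq_mul] <;>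
      (field_simp; ring)
  have hminor : (border c v 0 S).submatrix (Fin.succAbove 0) Fin.succ = S := rfl
  rw [hrow, det_succ_column_zero, Fin.sum_univ_succ, hminor]
  simp [border]

theorem det_border_neg_sq {K : Type*} [Field K] {m : ℕ} {a : K} (ha : a ≠ 0) (g : Fin m → K)
    (H : Matrix (Fin m) (Fin m) K) :
    (border (-a ^ 2) (-(a • g)) (-(a • g)) (-vecMulVec g g - a • H)).det
      = -a ^ 2 * (-a) ^ m * H.det := by
  have hschur :
      -vecMulVec g g - a • H - (-a ^ 2)⁻¹ • vecMulVec (-(a • g)) (-(a • g)) = (-a) • H := by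
    ext i j
    simp only [sub_apply, neg_apply, smul_apply, vecMulVec_apply, Pi.neg_apply, Pi.smul_apply,
      smul_eq_mul]
    field_simp
    ring
  rw [det_border (by simpa using ha), hschur, det_smul, Fintype.card_fin, mul_assoc]

end Matrix

section

variable {m : ℕ} {f g : (Fin m → ℝ) → ℝ} {x : Fin m → ℝ}

theorem pd_congr (h : f =ᶠ[𝓝 x] g) (i : Fin m) : pd f i x = pd g i x := by
  rw [pd, pd, h.fderiv_eq]

theorem pd_neg (i : Fin m) : pd (fun y => -f y) i x = -pd f i x := by
  simp [pd]

theorem pd_mul (hf : DifferentiableAt ℝ f x) (hg : DifferentiableAt ℝ g x) (i : Fin m) :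
    pd (fun y => f y * g y) i x = pd f i x * g x + f x * pd g i x := by
  simp only [pd, fderiv_fun_mul hf hg, add_apply, smul_apply, smul_eq_mul]
  ring

theorem differentiableAt_pd (hf : ContDiffAt ℝ 2 f x) (i : Fin m) :
    DifferentiableAt ℝ (pd f i) x :=
  ((hf.fderiv_right le_rfl).clm_apply contDiffAt_const).differentiableAt one_ne_zero

end

noncomputable def grad {m : ℕ} (f : (Fin m → ℝ) → ℝ) (x : Fin m → ℝ) : Fin m → ℝ :=
  fun i => pd f i x

theorem Jop_eq_det_border {n : ℕ} (ρ : (Fin (n + 1) → ℝ) → ℝ) (x : Fin (n + 1) → ℝ) :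
    Jop ρ x = (Matrix.border (2 * ρ x) (grad ρ x) (grad ρ x) (hess ρ x)).det :=
  rfl

section

variable {m : ℕ} {U : Set (Fin m → ℝ)} {ρ u : (Fin m → ℝ) → ℝ} {x : Fin m → ℝ}

theorem grad_of_eqOn_neg_half_sq (hU : IsOpen U) (hu : DifferentiableOn ℝ u U)
    (hρu : Set.EqOn ρ (fun y => -(u y * u y) / 2) U) (hx : x ∈ U) :
    grad ρ x = -(u x • grad u x) := by
  have hux := hu.differentiableAt (hU.mem_nhds hx)
  ext j
  rw [grad, pd_congr (Filter.eventuallyEq_of_mem (hU.mem_nhds hx) hρu), pd]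
  simp only [div_eq_mul_inv]
  rw [fderiv_mul_const (c := fun y => -(u y * u y)) (by fun_prop), fderiv_fun_neg,
    fderiv_fun_mul hux hux]
  simp only [smul_apply, add_apply, neg_apply, Pi.neg_apply, Pi.smul_apply, smul_eq_mul,
    grad, pd]
  ring

theorem hess_of_eqOn_neg_half_sq (hU : IsOpen U) (hu : ContDiffOn ℝ 2 u U)
    (hρu : Set.EqOn ρ (fun y => -(u y * u y) / 2) U) (hx : x ∈ U) :
    hess ρ x = -Matrix.vecMulVec (grad u x) (grad u x) - u x • hess u x := by
  have hux := hu.contDiffAt (hU.mem_nhds hx)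
  ext i j
  have hpd : pd ρ j =ᶠ[𝓝 x] fun y => -(u y * pd u j y) :=
    Filter.eventuallyEq_of_mem (hU.mem_nhds hx) fun y hy => by
      simpa [grad] using
        congrFun (grad_of_eqOn_neg_half_sq hU (hu.differentiableOn two_ne_zero) hρu hy) j
  rw [hess, Matrix.of_apply, pd_congr hpd, pd_neg,
    pd_mul (hux.differentiableAt two_ne_zero) (differentiableAt_pd hux j)]
  simp only [Matrix.sub_apply, Matrix.neg_apply, Matrix.smul_apply, Matrix.vecMulVec_apply,
    smul_eq_mul, grad, hess, Matrix.of_apply]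
  ring

end

theorem stmt2_general (n : ℕ) (U : Set (Fin (n + 1) → ℝ)) (hU : IsOpen U)
    (ρ : (Fin (n + 1) → ℝ) → ℝ) (hρ : ContDiffOn ℝ (⊤ : ℕ∞) ρ U)
    (hneg : ∀ x ∈ U, ρ x < 0) :
    ContDiffOn ℝ (⊤ : ℕ∞) (fun y => -Real.sqrt (-2 * ρ y)) U ∧
    ∀ x ∈ U,
      Jop ρ x =
        -((-(fun y => -Real.sqrt (-2 * ρ y)) x) ^ (n + 3) *
          (hess (fun y => -Real.sqrt (-2 * ρ y)) x).det) := by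
  set u : (Fin (n + 1) → ℝ) → ℝ := fun y => -Real.sqrt (-2 * ρ y)
  have hu : ContDiffOn ℝ (⊤ : ℕ∞) u U :=
    ((contDiffOn_const.mul hρ).sqrt fun x hx => by linarith [hneg x hx]).neg
  have hu2 : ContDiffOn ℝ 2 u U := hu.of_le (WithTop.coe_le_coe.mpr le_top)
  have hρu : Set.EqOn ρ (fun y => -(u y * u y) / 2) U := fun y hy => by
    simp only [u, neg_mul_neg, Real.mul_self_sqrt (by linarith [hneg y hy] : 0 ≤ -2 * ρ y)]
    ring
  refine ⟨hu, fun x hx => ?_⟩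
  have hux : u x ≠ 0 := neg_ne_zero.mpr (Real.sqrt_ne_zero'.mpr (by linarith [hneg x hx]))
  have hcorner : 2 * ρ x = -u x ^ 2 := by rw [hρu hx]; ring
  rw [Jop_eq_det_border, hcorner,
    grad_of_eqOn_neg_half_sq hU (hu2.differentiableOn two_ne_zero) hρu hx,
    hess_of_eqOn_neg_half_sq hU hu2 hρu hx, Matrix.det_border_neg_sq hux]
  ring

/-- With `u := -(-2ρ)^(1/2)`, one has `J[ρ] = -(-u)^(n+3) * det(Hess u)`. -/
theorem stmt2 (n : ℕ) (hn : 1 ≤ n) (U : Set (Fin (n + 1) → ℝ)) (hU : IsOpen U)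
    (ρ : (Fin (n + 1) → ℝ) → ℝ) (hρ : ContDiffOn ℝ (⊤ : ℕ∞) ρ U)
    (hneg : ∀ x ∈ U, ρ x < 0) :
    ContDiffOn ℝ (⊤ : ℕ∞) (fun y => -Real.sqrt (-2 * ρ y)) U ∧
    ∀ x ∈ U,
      Jop ρ x =
        -((-(fun y => -Real.sqrt (-2 * ρ y)) x) ^ (n + 3) *
          (hess (fun y => -Real.sqrt (-2 * ρ y)) x).det) :=
  stmt2_general n U hU ρ hρ hneg
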